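/- arXiv:1001.3971 — 2 statements merged into one kernel-verified Lean document; each statement's English description precedes it below -/
import Mathlib

section
/- Necessity of Matsumoto's condition for pure states: Let ψ ∈ ℂ^d be a unit vector, let (M_m)_{m∈Ω} be a POVM with finite outcome set Ω, let l_1,…,l_p ∈ ℂ^d, and suppose there exist real numbers ξ_m^j such that M_m^{1/2} l_j = ξ_m^j M_m^{1/2} ψ for all m ∈ Ω and all j. Then for all j,k one has ⟨l_j, l_k⟩ = Σ_{m∈Ω} ξ_m^j ξ_m^k ⟨ψ, M_m ψ⟩; in particular ⟨l_j, l_k⟩ is real for all j,k. -/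
open scoped BigOperators ComplexOrder

noncomputable section

namespace Matrix.PosSemidef

/-- The positive semidefinite square root of a positive semidefinite matrix (definition of the
older Mathlib, since removed). -/
def sqrt {n : Type*} [Fintype n] [DecidableEq n] {𝕜 : Type*} [RCLike 𝕜] {A : Matrix n n 𝕜}
    (hA : A.PosSemidef) : Matrix n n 𝕜 :=
  (hA.1.eigenvectorUnitary : Matrix n n 𝕜) *
    Matrix.diagonal (fun i => ((√(hA.1.eigenvalues i) : ℝ) : 𝕜)) *
    (star hA.1.eigenvectorUnitary : Matrix n n 𝕜)

end Matrix.PosSemidef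

/-- The Hermitian inner product on `Fin d → ℂ`, conjugate-linear in the first argument. -/
def inn {d : ℕ} (x y : Fin d → ℂ) : ℂ := ∑ i, (starRingEnd ℂ) (x i) * y i

/-! Write `M_m = S_m * S_m` with `S_m` the Hermitian square root. Completeness `∑ M_m = 1`
splits `⟨l_j, l_k⟩` into `∑ₘ ⟨S_m l_j, S_m l_k⟩`, and Matsumoto's condition turns each term into
`ξ_m^j ξ_m^k ⟨S_m ψ, S_m ψ⟩ = ξ_m^j ξ_m^k ⟨ψ, M_m ψ⟩`, which is real since `M_m ≥ 0` and the
`ξ_m^j` are real. -/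

namespace Matrix.PosSemidef

variable {n 𝕜 : Type*} [Fintype n] [DecidableEq n] [RCLike 𝕜] {A : Matrix n n 𝕜}

theorem sqrt_mul_self (hA : A.PosSemidef) : hA.sqrt * hA.sqrt = A := by
  conv_rhs => rw [hA.1.spectral_theorem, Unitary.conjStarAlgAut_apply]
  have hU : (star hA.1.eigenvectorUnitary : Matrix n n 𝕜) * hA.1.eigenvectorUnitary = 1 :=
    Unitary.coe_star_mul_self _
  simp only [sqrt, Matrix.mul_assoc]
  rw [← Matrix.mul_assoc (star hA.1.eigenvectorUnitary : Matrix n n 𝕜), hU, Matrix.one_mul,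
    ← Matrix.mul_assoc (diagonal _), diagonal_mul_diagonal]
  congr 3
  funext i
  rw [Function.comp_apply, ← RCLike.ofReal_mul, Real.mul_self_sqrt (hA.eigenvalues_nonneg i)]

theorem isHermitian_sqrt (hA : A.PosSemidef) : hA.sqrt.IsHermitian := by
  rw [sqrt, star_eq_conjTranspose]
  refine isHermitian_mul_mul_conjTranspose _ (isHermitian_diagonal_of_self_adjoint _ ?_)
  funext i
  simp

end Matrix.PosSemidef

section inn

open Matrix

variable {d : ℕ}

theorem inn_eq_dotProduct (x y : Fin d → ℂ) : inn x y = star x ⬝ᵥ y := by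
  simp [inn, dotProduct]

theorem inn_real_smul_real_smul (a b : ℝ) (x y : Fin d → ℂ) :
    inn ((a : ℂ) • x) ((b : ℂ) • y) = a * b * inn x y := by
  simp only [inn, Finset.mul_sum, Pi.smul_apply, smul_eq_mul, map_mul, Complex.conj_ofReal]
  exact Finset.sum_congr rfl fun _ _ => by ring

theorem inn_mulVec_of_isHermitian_of_mul_self {S A : Matrix (Fin d) (Fin d) ℂ}
    (hS : S.IsHermitian) (hSA : S * S = A) (x y : Fin d → ℂ) :
    inn x (A *ᵥ y) = inn (S *ᵥ x) (S *ᵥ y) := by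
  rw [inn_eq_dotProduct, inn_eq_dotProduct, star_mulVec, ← dotProduct_mulVec, hS.eq,
    mulVec_mulVec, hSA]

theorem inn_eq_sum_of_sum_eq_one {Ω : Type*} [Fintype Ω] {M : Ω → Matrix (Fin d) (Fin d) ℂ}
    (hMsum : ∑ m, M m = 1) (x y : Fin d → ℂ) : inn x y = ∑ m, inn x (M m *ᵥ y) := by
  simp only [inn_eq_dotProduct, ← dotProduct_sum, ← Matrix.sum_mulVec, hMsum, one_mulVec]

theorem im_inn_mulVec_self_of_posSemidef {A : Matrix (Fin d) (Fin d) ℂ} (hA : A.PosSemidef)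
    (x : Fin d → ℂ) : (inn x (A *ᵥ x)).im = 0 := by
  rw [inn_eq_dotProduct]
  exact (Complex.nonneg_iff.mp (hA.dotProduct_mulVec_nonneg x)).2.symm

end inn

theorem matsumoto_necessity_general {d p : ℕ} {Ω : Type} [Fintype Ω]
    (ψ : Fin d → ℂ)
    (M : Ω → Matrix (Fin d) (Fin d) ℂ)
    (hM : ∀ m, (M m).PosSemidef) (hMsum : ∑ m, M m = 1)
    (l : Fin p → (Fin d → ℂ)) (ξ : Ω → Fin p → ℝ)
    (hcond : ∀ m j, ((hM m).sqrt).mulVec (l j) = (ξ m j : ℂ) • ((hM m).sqrt).mulVec ψ) :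
    (∀ j k, inn (l j) (l k) = ∑ m, (ξ m j : ℂ) * (ξ m k : ℂ) * inn ψ ((M m).mulVec ψ)) ∧
      (∀ j k, (inn (l j) (l k)).im = 0) := by
  have hinn (j k : Fin p) :
      inn (l j) (l k) = ∑ m, (ξ m j : ℂ) * (ξ m k : ℂ) * inn ψ ((M m).mulVec ψ) := by
    rw [inn_eq_sum_of_sum_eq_one hMsum]
    refine Finset.sum_congr rfl fun m _ => ?_
    have hsqrt := inn_mulVec_of_isHermitian_of_mul_self (hM m).isHermitian_sqrt
      (hM m).sqrt_mul_self
    rw [hsqrt, hsqrt, hcond, hcond, inn_real_smul_real_smul]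
  refine ⟨hinn, fun j k => ?_⟩
  rw [hinn, Complex.im_sum]
  refine Finset.sum_eq_zero fun m _ => ?_
  rw [Complex.mul_im, im_inn_mulVec_self_of_posSemidef (hM m)]
  simp

/-- **Necessity of Matsumoto's condition for pure states.** -/
theorem matsumoto_necessity {d p : ℕ} {Ω : Type} [Fintype Ω]
    (ψ : Fin d → ℂ) (hψ : inn ψ ψ = 1)
    (M : Ω → Matrix (Fin d) (Fin d) ℂ)
    (hM : ∀ m, (M m).PosSemidef) (hMsum : ∑ m, M m = 1)
    (l : Fin p → (Fin d → ℂ)) (ξ : Ω → Fin p → ℝ)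
    (hcond : ∀ m j, ((hM m).sqrt).mulVec (l j) = (ξ m j : ℂ) • ((hM m).sqrt).mulVec ψ) :
    (∀ j k, inn (l j) (l k) = ∑ m, (ξ m j : ℂ) * (ξ m k : ℂ) * inn ψ ((M m).mulVec ψ)) ∧
      (∀ j k, (inn (l j) (l k)).im = 0) :=
  matsumoto_necessity_general ψ M hM hMsum l ξ hcond
end
end

section
/- Angular error bound for estimating a phase from perturbed cosine and sine (Theorem): Let α ∈ ℝ with 0 < α ≤ 1/2, and let x, y, x₀, y₀ ∈ ℝ satisfy x² + y² = 1, |x − x₀| ≤ α and |y − y₀| ≤ α. Then (x₀, y₀) ≠ (0, 0), and the circular distance between the arguments satisfies |arg(x + iy) − arg(x₀ + iy₀)|_{2π} ≤ arcsin(α) + arcsin(α/(1 − α)), where |a − b|_{2π} denotes the distance between a and b modulo 2π, i.e. min over integers k of |a − b − 2πk|. -/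
/-!
Pass from `z = x + iy` to `z₀ = x₀ + iy₀` through `w = x + iy₀`, changing one coordinate
at a time. If `‖u - v‖ ≤ t‖u‖` with `t ≤ 1`, then `v` lies in the disc of centre `u` and
radius `t‖u‖`, which the origin sees under a half-angle `arcsin t`; so `u * conj v` has
nonnegative real part and argument at most `arcsin t` in absolute value. For the first step
`‖z - w‖ ≤ α = α‖z‖`; for the second, `‖w‖ ≥ 1 - α` gives `‖w - z₀‖ ≤ α ≤ (α / (1 - α))‖w‖`,
and `α / (1 - α) ≤ 1` because `α ≤ 1/2`.
-/

open scoped BigOperators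

noncomputable section

/-- Circular distance: the distance between `a` and `b` modulo `2π`, i.e. the infimum
over integers `k` of `|a − b − 2πk|`. -/
def circDist (a b : ℝ) : ℝ := ⨅ k : ℤ, |a - b - 2 * Real.pi * k|

open ComplexConjugate

lemma circDist_le_abs_of_coe_eq {a b r : ℝ} (h : ((a - b : ℝ) : Real.Angle) = r) :
    circDist a b ≤ |r| := by
  obtain ⟨k, hk⟩ := Real.Angle.angle_eq_iff_two_pi_dvd_sub.1 h
  calc circDist a b ≤ |a - b - 2 * Real.pi * k| :=
        ciInf_le ⟨0, by rintro _ ⟨k, rfl⟩; positivity⟩ k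
    _ = |r| := by rw [show a - b - 2 * Real.pi * k = r by linarith]

namespace Complex

lemma coe_arg_mul_conj {z w : ℂ} (hz : z ≠ 0) (hw : w ≠ 0) :
    ((z * conj w).arg : Real.Angle) = z.arg - w.arg := by
  rw [arg_mul_coe_angle hz ((map_ne_zero _).2 hw), arg_conj_coe_angle, sub_eq_add_neg]

lemma circDist_arg_le {z w v : ℂ} (hz : z ≠ 0) (hw : w ≠ 0) (hv : v ≠ 0) :
    circDist z.arg v.arg ≤ |(z * conj w).arg| + |(w * conj v).arg| := by
  refine (circDist_le_abs_of_coe_eq ?_).trans (abs_add_le _ _)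
  rw [Real.Angle.coe_add, coe_arg_mul_conj hz hw, coe_arg_mul_conj hw hv, Real.Angle.coe_sub]
  abel

lemma abs_arg_le_arcsin {u : ℂ} {t : ℝ} (ht : 0 ≤ t) (hre : 0 ≤ u.re)
    (him : |u.im| ≤ t * ‖u‖) : |u.arg| ≤ Real.arcsin t := by
  have habs : |Real.arcsin (u.im / ‖u‖)| = Real.arcsin (|u.im| / ‖u‖) := by
    rcases le_total 0 u.im with h | h
    · rw [abs_of_nonneg h, abs_of_nonneg (Real.arcsin_nonneg.2 (by positivity))]
    · rw [abs_of_nonpos h, abs_of_nonpos (Real.arcsin_nonpos.2 (div_nonpos_of_nonpos_of_nonneg h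
        (norm_nonneg _))), neg_div, Real.arcsin_neg]
  rw [arg_of_re_nonneg hre, habs]
  exact Real.monotone_arcsin (div_le_of_le_mul₀ (norm_nonneg _) ht him)

lemma abs_im_mul_conj_le (u v : ℂ) : |(u * conj v).im| ≤ ‖u - v‖ * ‖v‖ := by
  have hvv : (v * conj v).im = 0 := by rw [mul_conj, ofReal_im]
  calc |(u * conj v).im| = |((u - v) * conj v).im| := by rw [sub_mul, sub_im, hvv, sub_zero]
    _ ≤ ‖(u - v) * conj v‖ := abs_im_le_norm _
    _ = ‖u - v‖ * ‖v‖ := by rw [norm_mul, norm_conj]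

lemma sq_norm_sub_le_re_mul_conj (u v : ℂ) : ‖u‖ ^ 2 - ‖u - v‖ * ‖u‖ ≤ (u * conj v).re := by
  have huu : (u * conj u).re = ‖u‖ ^ 2 := by rw [mul_conj, ofReal_re, normSq_eq_norm_sq]
  have hle : (u * conj (u - v)).re ≤ ‖u - v‖ * ‖u‖ := by
    calc (u * conj (u - v)).re ≤ ‖u * conj (u - v)‖ := re_le_norm _
      _ = ‖u - v‖ * ‖u‖ := by rw [norm_mul, norm_conj, mul_comm]
  have hsplit : u * conj v = u * conj u - u * conj (u - v) := by rw [map_sub]; ring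
  rw [hsplit, sub_re, huu]
  linarith

lemma abs_arg_mul_conj_le_arcsin {u v : ℂ} {t : ℝ} (ht₀ : 0 ≤ t) (ht₁ : t ≤ 1)
    (h : ‖u - v‖ ≤ t * ‖u‖) : |(u * conj v).arg| ≤ Real.arcsin t := by
  apply abs_arg_le_arcsin ht₀
  · nlinarith [sq_norm_sub_le_re_mul_conj u v, norm_nonneg u]
  · calc |(u * conj v).im| ≤ ‖u - v‖ * ‖v‖ := abs_im_mul_conj_le u v
      _ ≤ t * ‖u‖ * ‖v‖ := by gcongr
      _ = t * ‖u * conj v‖ := by rw [norm_mul, norm_conj, mul_assoc]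

end Complex

open Complex in
theorem angular_error_bound_general (α x y x₀ y₀ : ℝ) (hα : α ≤ 1 / 2)
    (hxy : x ^ 2 + y ^ 2 = 1) (hx : |x - x₀| ≤ α) (hy : |y - y₀| ≤ α) :
    ¬(x₀ = 0 ∧ y₀ = 0) ∧
    circDist (Complex.arg ((x : ℂ) + (y : ℂ) * Complex.I))
        (Complex.arg ((x₀ : ℂ) + (y₀ : ℂ) * Complex.I))
      ≤ Real.arcsin α + Real.arcsin (α / (1 - α)) := by
  have hne : ¬(x₀ = 0 ∧ y₀ = 0) := by
    rintro ⟨rfl, rfl⟩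
    nlinarith [abs_le.1 hx, abs_le.1 hy]
  refine ⟨hne, ?_⟩
  set z : ℂ := x + y * I
  set w : ℂ := x + y₀ * I
  set z₀ : ℂ := x₀ + y₀ * I
  have hα₀ : 0 ≤ α := (abs_nonneg _).trans hx
  have hz : ‖z‖ = 1 := by simp [z, norm_def, normSq_apply, ← sq, hxy]
  have hzw : ‖z - w‖ ≤ α := by
    simpa [z, w, norm_def, normSq_apply, ← sq, Real.sqrt_sq_eq_abs] using hy
  have hwz₀ : ‖w - z₀‖ ≤ α := by
    simpa [w, z₀, norm_def, normSq_apply, ← sq, Real.sqrt_sq_eq_abs] using hx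
  have hw : 1 - α ≤ ‖w‖ := by linarith [norm_sub_norm_le z w]
  have hz_ne : z ≠ 0 := norm_ne_zero_iff.1 (by rw [hz]; exact one_ne_zero)
  have hw_ne : w ≠ 0 := norm_pos_iff.1 (by linarith)
  have hz₀_ne : z₀ ≠ 0 := by simpa [z₀, Complex.ext_iff] using hne
  calc circDist z.arg z₀.arg ≤ |(z * conj w).arg| + |(w * conj z₀).arg| :=
        circDist_arg_le hz_ne hw_ne hz₀_ne
    _ ≤ Real.arcsin α + Real.arcsin (α / (1 - α)) := by
        gcongr
        · exact abs_arg_mul_conj_le_arcsin hα₀ (by linarith) (by rwa [hz, mul_one])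
        · refine abs_arg_mul_conj_le_arcsin (div_nonneg hα₀ (by linarith)) ?_ ?_
          · rw [div_le_one₀ (by linarith)]; linarith
          · rw [div_mul_eq_mul_div, le_div_iff₀ (by linarith)]
            nlinarith

/-- **Angular error bound for estimating a phase from perturbed cosine and sine.**
If `(x, y)` lies on the unit circle and `(x₀, y₀)` approximates it to within `α ≤ 1/2`
in each coordinate, then `(x₀, y₀) ≠ (0, 0)` and the circular distance between the
arguments is at most `arcsin α + arcsin (α/(1 − α))`. -/
theorem angular_error_bound (α x y x₀ y₀ : ℝ) (hα0 : 0 < α) (hα : α ≤ 1 / 2)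
    (hxy : x ^ 2 + y ^ 2 = 1) (hx : |x - x₀| ≤ α) (hy : |y - y₀| ≤ α) :
    ¬(x₀ = 0 ∧ y₀ = 0) ∧
    circDist (Complex.arg ((x : ℂ) + (y : ℂ) * Complex.I))
        (Complex.arg ((x₀ : ℂ) + (y₀ : ℂ) * Complex.I))
      ≤ Real.arcsin α + Real.arcsin (α / (1 - α)) :=
  angular_error_bound_general α x y x₀ y₀ hα hxy hx hy
end
end
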